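/- Let p ∈ [1,∞), 0 < ε ≤ 1, N(x) = exp(−⟨x⟩^p), and N_ε(x) = ε^{−d}N(x/ε). Let ρ be a Borel probability measure on ℝ^d and R > 0 such that ρ(B_R) ≥ 1/2. Then there exists a constant C_{p,R} > 0 depending only on p, R (and d) such that |log((N_ε*ρ)(x))| ≤ C_{p,R} (⟨x⟩/ε)^p for all x ∈ ℝ^d; in particular N_ε*ρ(x) > 0 everywhere. -/

import Mathlib

open MeasureTheory Filter
open scoped ENNReal Topology RealInnerProductSpace

noncomputable section

/-- Euclidean space `ℝ^d`. -/
abbrev Rd (d : ℕ) : Type := EuclideanSpace ℝ (Fin d)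

/-- Japanese bracket `⟨x⟩ = √(1+‖x‖²)`. -/
def jbr {d : ℕ} (x : Rd d) : ℝ := Real.sqrt (1 + ‖x‖ ^ 2)

/-- The normalised kernels `N_p(x) = Z_p⁻¹ exp(-⟨x⟩^p)`, `Z_p = ∫ exp(-⟨x⟩^p)`. -/
def Nker (d p : ℕ) : Rd d → ℝ := fun x =>
  (∫ y : Rd d, Real.exp (-(jbr y ^ p)))⁻¹ * Real.exp (-(jbr x ^ p))

/-- Assumption (V1): `V ∈ C_b ∩ C¹`, `V ≥ 0`, `∫ V = 1`, `V` even. -/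
structure IsV1 {d : ℕ} (V : Rd d → ℝ) : Prop where
  contDiff : ContDiff ℝ 1 V
  bdd : ∃ M, ∀ x, V x ≤ M
  nonneg : ∀ x, 0 ≤ V x
  integrable : Integrable V
  int_one : (∫ x : Rd d, V x) = 1
  symm : ∀ x, V (-x) = V x

/-- Rescaled mollifier `V_ε(x) = ε^{-d} V(x/ε)`. -/
def moll {d : ℕ} (ε : ℝ) (V : Rd d → ℝ) (x : Rd d) : ℝ := (ε ^ d)⁻¹ * V (ε⁻¹ • x)

/-- Convolution with a measure: `(V_ε * μ)(x) = ∫ V_ε(x - y) dμ(y)`. -/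
def convM {d : ℕ} (ε : ℝ) (V : Rd d → ℝ) (μ : Measure (Rd d)) (x : Rd d) : ℝ :=
  ∫ y, moll ε V (x - y) ∂μ

/-- `(∇V_ε * g)(x) = ∫ ∇V_ε(x - y) g(y) dy`. -/
def convGradF {d : ℕ} (ε : ℝ) (V : Rd d → ℝ) (g : Rd d → ℝ) (x : Rd d) : Rd d :=
  ∫ y, g y • gradient (moll ε V) (x - y)

/-- Finite second moment. -/
def FinSecondMoment {d : ℕ} (μ : Measure (Rd d)) : Prop :=
  Integrable (fun x => ‖x‖ ^ 2) μ

/-- `γ` is a transport plan between `μ` and `ν`. -/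
def IsCoupling {d : ℕ} (γ : Measure (Rd d × Rd d)) (μ ν : Measure (Rd d)) : Prop :=
  IsProbabilityMeasure γ ∧ γ.map Prod.fst = μ ∧ γ.map Prod.snd = ν

/-- Squared 2-Wasserstein distance. -/
def dW2sq {d : ℕ} (μ ν : Measure (Rd d)) : ℝ :=
  sInf ((fun γ : Measure (Rd d × Rd d) => ∫ q, ‖q.1 - q.2‖ ^ 2 ∂γ) '' {γ | IsCoupling γ μ ν})

/-- 2-Wasserstein distance. -/
def dW {d : ℕ} (μ ν : Measure (Rd d)) : ℝ := Real.sqrt (dW2sq μ ν)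

/-- Absolutely continuous curve in `(P₂, d_W)` on `[0,T]`. -/
def ACcurve {d : ℕ} (T : ℝ) (ρ : ℝ → Measure (Rd d)) : Prop :=
  ∃ g : ℝ → ℝ, (∀ r, 0 ≤ g r) ∧ IntegrableOn g (Set.Icc 0 T) ∧
    ∀ s t : ℝ, 0 ≤ s → s ≤ t → t ≤ T → dW (ρ s) (ρ t) ≤ ∫ r in s..t, g r

/-- The regularised entropy `H_σ^ε`. -/
def Hsig {d : ℕ} (ε σ : ℝ) (V N : Rd d → ℝ) (μ : Measure (Rd d)) : ℝ :=
  ∫ x, ((1 - σ) * convM ε V μ x + σ * N x) *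
    Real.log ((1 - σ) * convM ε V μ x + σ * N x)

/-- Geodesic interpolant `ρ_α = ((1-α)π¹ + απ²)_# γ`. -/
def geod {d : ℕ} (γ : Measure (Rd d × Rd d)) (α : ℝ) : Measure (Rd d) :=
  γ.map fun q : Rd d × Rd d => (1 - α) • q.1 + α • q.2

/-- Fast diffusion kernel `V(x) = c ⟨x⟩^{-2α}`, normalised. -/
def Vfd (d : ℕ) (α : ℝ) : Rd d → ℝ := fun x =>
  (∫ y : Rd d, jbr y ^ (-(2 * α)))⁻¹ * jbr x ^ (-(2 * α))

/-- Laplacian `Δφ(x) = ∑ ∂²φ/∂x_i²`. -/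
def lapl {d : ℕ} (φ : Rd d → ℝ) (x : Rd d) : ℝ :=
  ∑ i : Fin d,
    fderiv ℝ (fun y => fderiv ℝ φ y (EuclideanSpace.single i 1)) x (EuclideanSpace.single i 1)

/-- Weighted convolution `((V_ε w) * ρ)(x) = ∫ V_ε(x-y) w(x-y) dρ(y)`. -/
def wconv {d : ℕ} (ε : ℝ) (V : Rd d → ℝ) (w : Rd d → ℝ) (ρ : Measure (Rd d)) (x : Rd d) : ℝ :=
  ∫ y, moll ε V (x - y) * w (x - y) ∂ρ

/-- Continuity in the narrow topology on `[0,T]`. -/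
def NarrowContinuousOn {d : ℕ} (T : ℝ) (ρ : ℝ → Measure (Rd d)) : Prop :=
  ∀ f : Rd d → ℝ, Continuous f → (∃ M, ∀ x, |f x| ≤ M) →
    ContinuousOn (fun t => ∫ x, f x ∂(ρ t)) (Set.Icc 0 T)

/-- Weak measure solution of the regularised nonlocal heat equation (NLHE_σ). -/
def IsWeakSolNLHEs {d : ℕ} (T ε σ : ℝ) (V N : Rd d → ℝ)
    (ρ₀ : Measure (Rd d)) (ρ : ℝ → Measure (Rd d)) : Prop :=
  ρ 0 = ρ₀ ∧
  (∀ t ∈ Set.Icc (0 : ℝ) T, IsProbabilityMeasure (ρ t) ∧ FinSecondMoment (ρ t)) ∧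
  ACcurve T ρ ∧
  ∀ φ : Rd d → ℝ, ContDiff ℝ 1 φ → HasCompactSupport φ → ∀ t ∈ Set.Icc (0 : ℝ) T,
    (∫ x, φ x ∂(ρ t)) - (∫ x, φ x ∂ρ₀)
      = -(1 - σ) * ∫ s in (0 : ℝ)..t,
          ∫ x, ⟪gradient φ x,
              convGradF ε V
                (fun y => Real.log ((1 - σ) * convM ε V (ρ s) y + σ * N y)) x⟫ ∂(ρ s)

/-- The a priori bounds provided by the JKO construction, with constant `C`. -/
def JKOBounds {d : ℕ} (T ε σ : ℝ) (V N : Rd d → ℝ) (C : ℝ) (ρ : ℝ → Measure (Rd d)) : Prop :=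
  (∀ t ∈ Set.Icc (0 : ℝ) T, (∫ x, ‖x‖ ^ 2 ∂(ρ t)) ≤ C) ∧
  (∀ s ∈ Set.Icc (0 : ℝ) T, ∀ t ∈ Set.Icc (0 : ℝ) T, dW2sq (ρ s) (ρ t) ≤ C * |t - s|) ∧
  (∫ t in Set.Ioc (0 : ℝ) T,
      ∫ x, ‖gradient (fun y => Real.sqrt ((1 - σ) * convM ε V (ρ t) y + σ * N y)) x‖ ^ 2) ≤ C

/-- Weak solution of the heat equation on `[0,T]` with initial datum `ρ₀`. -/
def IsWeakSolHeat {d : ℕ} (T : ℝ) (ρ₀ : Measure (Rd d)) (ρ : ℝ → Measure (Rd d)) : Prop :=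
  ρ 0 = ρ₀ ∧
  (∀ t ∈ Set.Icc (0 : ℝ) T, IsProbabilityMeasure (ρ t) ∧ FinSecondMoment (ρ t)) ∧
  ACcurve T ρ ∧
  ∃ u : ℝ → Rd d → ℝ,
    (∀ t ∈ Set.Icc (0 : ℝ) T, (∀ x, 0 ≤ u t x) ∧
      ρ t = volume.withDensity fun x => ENNReal.ofReal (u t x)) ∧
    Integrable (fun q : ℝ × Rd d => ‖gradient (fun y => Real.sqrt (u q.1 y)) q.2‖ ^ 2)
      ((volume.restrict (Set.Ioc (0 : ℝ) T)).prod volume) ∧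
    ∀ φ : Rd d → ℝ, ContDiff ℝ 1 φ → HasCompactSupport φ → ∀ t ∈ Set.Icc (0 : ℝ) T,
      (∫ x, φ x ∂(ρ t)) - (∫ x, φ x ∂ρ₀)
        = -∫ s in (0 : ℝ)..t, ∫ x, ⟪gradient φ x, gradient (u s) x⟫

/-- Weak solution of the fast diffusion equation `∂_t ρ = Δρ^m` on `[0,T]`. -/
def IsWeakSolFDE {d : ℕ} (T m : ℝ) (ρ₀ : Measure (Rd d)) (ρ : ℝ → Measure (Rd d)) : Prop :=
  ρ 0 = ρ₀ ∧
  (∀ t ∈ Set.Icc (0 : ℝ) T, IsProbabilityMeasure (ρ t) ∧ FinSecondMoment (ρ t)) ∧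
  ACcurve T ρ ∧
  ∃ u : ℝ → Rd d → ℝ,
    (∀ t ∈ Set.Icc (0 : ℝ) T, (∀ x, 0 ≤ u t x) ∧
      ρ t = volume.withDensity fun x => ENNReal.ofReal (u t x)) ∧
    ∀ φ : Rd d → ℝ, ContDiff ℝ 2 φ → HasCompactSupport φ → ∀ t ∈ Set.Icc (0 : ℝ) T,
      (∫ x, φ x ∂(ρ t)) - (∫ x, φ x ∂ρ₀)
        = ∫ s in (0 : ℝ)..t, ∫ x, lapl φ x * u s x ^ m

/-! The kernel is bounded by `1`, which gives `N_ε * ρ ≤ ε^{-d}` and the upper bound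
`d log(1/ε) ≤ d (⟨x⟩/ε)^p`. For the lower bound, Peetre's inequality
`⟨x - y⟩ ≤ √2 ⟨x⟩⟨y⟩` shows that `N_ε(x - y) ≥ exp(-K (⟨x⟩/ε)^p)` with `K = (√(2(1+R²)))^p`
for every `y ∈ B_R`, and `B_R` carries half of the mass of `ρ`. -/

section JapaneseBracket

variable {d : ℕ}

lemma one_le_jbr (x : Rd d) : 1 ≤ jbr x :=
  Real.one_le_sqrt.mpr (le_add_of_nonneg_right (sq_nonneg _))

lemma jbr_pos (x : Rd d) : 0 < jbr x :=
  one_pos.trans_le (one_le_jbr x)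

lemma continuous_jbr : Continuous (jbr : Rd d → ℝ) :=
  (continuous_const.add (continuous_norm.pow 2)).sqrt

lemma jbr_le_of_norm_le {y : Rd d} {R : ℝ} (hy : ‖y‖ ≤ R) : jbr y ≤ √(1 + R ^ 2) :=
  Real.sqrt_le_sqrt (by gcongr)

/-- Peetre's inequality. -/
lemma jbr_sub_le (x y : Rd d) : jbr (x - y) ≤ √2 * jbr x * jbr y := by
  have hsq : ‖x - y‖ ^ 2 ≤ 2 * ‖x‖ ^ 2 + 2 * ‖y‖ ^ 2 := by
    nlinarith [norm_sub_le x y, norm_nonneg (x - y), sq_nonneg (‖x‖ - ‖y‖)]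
  rw [jbr, jbr, jbr, ← Real.sqrt_mul zero_le_two, ← Real.sqrt_mul (by positivity)]
  exact Real.sqrt_le_sqrt (by nlinarith [mul_nonneg (sq_nonneg ‖x‖) (sq_nonneg ‖y‖)])

lemma jbr_inv_smul_le {ε : ℝ} (hε : 0 < ε) (hε1 : ε ≤ 1) (z : Rd d) :
    jbr (ε⁻¹ • z) ≤ jbr z / ε := by
  have hcancel : ε⁻¹ ^ 2 * ε ^ 2 = 1 := by rw [← mul_pow, inv_mul_cancel₀ hε.ne', one_pow]
  rw [jbr, jbr, Real.sqrt_le_iff, norm_smul, Real.norm_of_nonneg (inv_nonneg.mpr hε.le),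
    div_pow, Real.sq_sqrt (by positivity)]
  refine ⟨by positivity, ?_⟩
  rw [le_div_iff₀ (by positivity), mul_pow]
  nlinarith [pow_le_one₀ (n := 2) hε.le hε1]

lemma inv_le_jbr_div_rpow {ε p : ℝ} (hε : 0 < ε) (hε1 : ε ≤ 1) (hp : 1 ≤ p) (x : Rd d) :
    ε⁻¹ ≤ (jbr x / ε) ^ p := by
  have hinv : 1 ≤ ε⁻¹ := one_le_inv₀ hε |>.mpr hε1
  calc ε⁻¹ = ε⁻¹ ^ (1 : ℝ) := (Real.rpow_one _).symm
    _ ≤ ε⁻¹ ^ p := Real.rpow_le_rpow_of_exponent_le hinv hp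
    _ ≤ (jbr x / ε) ^ p := by
        gcongr
        rw [div_eq_mul_inv]
        exact le_mul_of_one_le_left (by positivity) (one_le_jbr x)

end JapaneseBracket

/-- The kernel `N(z) = exp(-⟨z⟩^p)`. -/
def expBracket {d : ℕ} (p : ℝ) (z : Rd d) : ℝ := Real.exp (-(jbr z ^ p))

section ExpBracket

variable {d : ℕ} {p ε : ℝ}

lemma continuous_expBracket (p : ℝ) : Continuous (expBracket (d := d) p) :=
  Real.continuous_exp.comp
    (continuous_jbr.rpow_const fun z => Or.inl (jbr_pos z).ne').neg

lemma expBracket_le_one (z : Rd d) : expBracket p z ≤ 1 := by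
  rw [expBracket, Real.exp_le_one_iff, neg_nonpos]
  exact Real.rpow_nonneg (jbr_pos z).le p

lemma moll_expBracket_pos (hε : 0 < ε) (z : Rd d) : 0 < moll ε (expBracket p) z := by
  unfold moll expBracket
  positivity

lemma moll_expBracket_le (hε : 0 < ε) (z : Rd d) :
    moll ε (expBracket p) z ≤ (ε ^ d)⁻¹ :=
  mul_le_of_le_one_right (by positivity) (expBracket_le_one _)

lemma exp_neg_le_moll_expBracket (hε : 0 < ε) (hε1 : ε ≤ 1) (hp : 0 ≤ p) {R : ℝ}
    (x : Rd d) {y : Rd d} (hy : ‖y‖ ≤ R) :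
    Real.exp (-(√(2 * (1 + R ^ 2)) ^ p * (jbr x / ε) ^ p))
      ≤ moll ε (expBracket p) (x - y) := by
  have hbracket : jbr (ε⁻¹ • (x - y)) ≤ √(2 * (1 + R ^ 2)) * (jbr x / ε) :=
    calc jbr (ε⁻¹ • (x - y)) ≤ jbr (x - y) / ε := jbr_inv_smul_le hε hε1 _
      _ ≤ √2 * jbr x * √(1 + R ^ 2) / ε := by
          refine div_le_div_of_nonneg_right ((jbr_sub_le x y).trans ?_) hε.le
          exact mul_le_mul_of_nonneg_left (jbr_le_of_norm_le hy) (by positivity [jbr_pos x])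
      _ = √(2 * (1 + R ^ 2)) * (jbr x / ε) := by
          rw [Real.sqrt_mul zero_le_two]
          ring
  have hεd : 1 ≤ (ε ^ d)⁻¹ := one_le_inv₀ (by positivity) |>.mpr (pow_le_one₀ hε.le hε1)
  have hexp : Real.exp (-(√(2 * (1 + R ^ 2)) ^ p * (jbr x / ε) ^ p))
      ≤ expBracket p (ε⁻¹ • (x - y)) := by
    rw [← Real.mul_rpow (by positivity) (div_pos (jbr_pos x) hε).le]
    exact Real.exp_le_exp.mpr (neg_le_neg (Real.rpow_le_rpow (jbr_pos _).le hbracket hp))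
  unfold moll
  simpa only [one_mul] using mul_le_mul hεd hexp (Real.exp_pos _).le (by positivity)

variable {ρ : Measure (Rd d)}

lemma integrable_moll_expBracket [IsFiniteMeasure ρ] (hε : 0 < ε) (x : Rd d) :
    Integrable (fun y => moll ε (expBracket p) (x - y)) ρ := by
  have hcont : Continuous fun y => moll ε (expBracket p) (x - y) := by
    unfold moll
    exact continuous_const.mul ((continuous_expBracket p).comp (by fun_prop))
  refine (integrable_const (ε ^ d)⁻¹).mono' hcont.aestronglyMeasurable (ae_of_all _ fun y => ?_)
  rw [Real.norm_of_nonneg (moll_expBracket_pos hε _).le]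
  exact moll_expBracket_le hε _

lemma convM_expBracket_le [IsProbabilityMeasure ρ] (hε : 0 < ε) (x : Rd d) :
    convM ε (expBracket p) ρ x ≤ (ε ^ d)⁻¹ :=
  (integral_mono (integrable_moll_expBracket hε x) (integrable_const _)
    fun y => moll_expBracket_le hε _).trans_eq (by simp)

lemma exp_neg_div_two_le_convM_expBracket [IsProbabilityMeasure ρ] (hε : 0 < ε) (hε1 : ε ≤ 1)
    (hp : 0 ≤ p) {R : ℝ} (hρR : (1 / 2 : ℝ≥0∞) ≤ ρ (Metric.closedBall 0 R)) (x : Rd d) :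
    Real.exp (-(√(2 * (1 + R ^ 2)) ^ p * (jbr x / ε) ^ p)) / 2
      ≤ convM ε (expBracket p) ρ x := by
  set a := Real.exp (-(√(2 * (1 + R ^ 2)) ^ p * (jbr x / ε) ^ p))
  have hball : ρ.real (Metric.closedBall 0 R)
      ≤ ρ.real {y | a ≤ moll ε (expBracket p) (x - y)} :=
    measureReal_mono fun y hy =>
      exp_neg_le_moll_expBracket hε hε1 hp x (mem_closedBall_zero_iff.mp hy)
  have hhalf : 1 / 2 ≤ ρ.real (Metric.closedBall 0 R) := by
    simpa [measureReal_def] using ENNReal.toReal_mono (measure_ne_top ρ _) hρR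
  calc a / 2 ≤ a * ρ.real {y | a ≤ moll ε (expBracket p) (x - y)} := by
        rw [div_eq_mul_one_div]
        gcongr
        exact hhalf.trans hball
    _ ≤ convM ε (expBracket p) ρ x :=
        mul_meas_ge_le_integral_of_nonneg (ae_of_all _ fun y => (moll_expBracket_pos hε _).le)
          (integrable_moll_expBracket hε x) a

end ExpBracket

lemma abs_log_le_of_exp_neg_div_two_le {d : ℕ} {v ε K A : ℝ} (hε : 0 < ε) (hK : 0 ≤ K)
    (hεA : ε⁻¹ ≤ A) (hA : 1 ≤ A) (hlow : Real.exp (-(K * A)) / 2 ≤ v) (hup : v ≤ (ε ^ d)⁻¹) :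
    |Real.log v| ≤ (d + 1 + K) * A := by
  have hv : 0 < v := (by positivity : (0 : ℝ) < _).trans_le hlow
  rw [abs_le]
  constructor
  · have hlog := Real.log_le_log (by positivity) hlow
    rw [Real.log_div (Real.exp_ne_zero _) two_ne_zero, Real.log_exp] at hlog
    nlinarith [Real.log_two_lt_d9]
  · have hlog := Real.log_le_log hv hup
    rw [← inv_pow, Real.log_pow] at hlog
    nlinarith [Real.log_le_self (inv_nonneg.mpr hε.le)]

theorem log_conv_global_rescaling_general
    (d : ℕ) (p : ℝ) (hp : 1 ≤ p) (R : ℝ) :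
    ∃ C > 0, ∀ ε : ℝ, 0 < ε → ε ≤ 1 →
      ∀ ρ : Measure (Rd d), IsProbabilityMeasure ρ →
        (1 / 2 : ℝ≥0∞) ≤ ρ (Metric.closedBall 0 R) →
        ∀ x : Rd d,
          0 < convM ε (fun z => Real.exp (-(jbr z ^ p))) ρ x ∧
          |Real.log (convM ε (fun z => Real.exp (-(jbr z ^ p))) ρ x)|
            ≤ C * (jbr x / ε) ^ p := by
  have hp0 : 0 ≤ p := zero_le_one.trans hp
  refine ⟨d + 1 + √(2 * (1 + R ^ 2)) ^ p, by positivity, fun ε hε hε1 ρ _ hρR x => ?_⟩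
  have hlow := exp_neg_div_two_le_convM_expBracket hε hε1 hp0 hρR x
  have hεA := inv_le_jbr_div_rpow hε hε1 hp x
  refine ⟨(by positivity : (0 : ℝ) < _).trans_le hlow, ?_⟩
  exact abs_log_le_of_exp_neg_div_two_le hε (by positivity) hεA
    ((one_le_inv₀ hε |>.mpr hε1).trans hεA) hlow (convM_expBracket_le hε x)

/-- positivity and logarithmic bound for the mollification with
the globally supported kernel `N(x) = exp(-⟨x⟩^p)`:
`|log(N_ε*ρ(x))| ≤ C_{p,R} (⟨x⟩/ε)^p` whenever `ρ(B_R) ≥ 1/2`. -/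
theorem log_conv_global_rescaling
    (d : ℕ) (p : ℝ) (hp : 1 ≤ p) (R : ℝ) (hR : 0 < R) :
    ∃ C > 0, ∀ ε : ℝ, 0 < ε → ε ≤ 1 →
      ∀ ρ : Measure (Rd d), IsProbabilityMeasure ρ →
        (1 / 2 : ℝ≥0∞) ≤ ρ (Metric.closedBall 0 R) →
        ∀ x : Rd d,
          0 < convM ε (fun z => Real.exp (-(jbr z ^ p))) ρ x ∧
          |Real.log (convM ε (fun z => Real.exp (-(jbr z ^ p))) ρ x)|
            ≤ C * (jbr x / ε) ^ p :=
  log_conv_global_rescaling_general d p hp R
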